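/- Under Assumption (A), for every x ∈ D and every n ≥ 0: 𝔼_x[η_S(X_n) 𝟙_{j_S(X_n) = j_S(x)} 𝟙_{n < τ_∂}] = θ_{0,S}^n η_S(x). -/

import Mathlib

open MeasureTheory ProbabilityTheory Filter ENNReal

variable {α : Type*} [MeasurableSpace α]

noncomputable def kmass (S : ℕ → Kernel α α) (n : ℕ) (μ : Measure α) : ℝ≥0∞ :=
  Measure.bind μ (fun x => S n x) Set.univ

noncomputable def expParam (S : ℕ → Kernel α α) (μ : Measure α) : ℝ≥0∞ :=
  sInf {θ : ℝ≥0∞ | Filter.liminf (fun n : ℕ => θ⁻¹ ^ n * kmass S n μ) Filter.atTop = 0}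

noncomputable def theta0 (S : ℕ → Kernel α α) : ℝ≥0∞ :=
  ⨆ x : α, expParam S (Measure.dirac x)

noncomputable def polyParam (S : ℕ → Kernel α α) (μ : Measure α) : ℝ :=
  sInf {l : ℝ | 0 ≤ l ∧
    Filter.liminf (fun n : ℕ => (n : ℝ≥0∞) ^ (-l) * (theta0 S)⁻¹ ^ n * kmass S n μ)
      Filter.atTop = 0}

noncomputable def jfun (S : ℕ → Kernel α α) (x : α) : ℝ :=
  polyParam S (Measure.dirac x)

def IsSubMarkovSemigroup (S : ℕ → Kernel α α) : Prop :=
  S 0 = Kernel.id ∧ (∀ n m, S (n + m) = (S m) ∘ₖ (S n)) ∧ ∀ n x, (S n) x Set.univ ≤ 1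

/-- **Assumption (A)** of Champagnat–Villemonais, for the sub-Markovian semigroup `S`,
with weight function `W`, probability measures `ν i`, functions `η i` (`i` in the finite or
countable index set `I`) and rate sequence `a`. -/
structure AssumptionA (S : ℕ → Kernel α α) {I : Type} (W : α → ℝ)
    (ν : I → Measure α) (η : I → α → ℝ) (a : ℕ → ℝ) : Prop where
  countable : Countable I
  theta0_pos : 0 < theta0 S
  theta0_le_one : theta0 S ≤ 1
  j_nat : ∀ x : α, ∃ k : ℕ, jfun S x = (k : ℝ)
  W_meas : Measurable W
  one_le_W : ∀ x, 1 ≤ W x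
  nu_prob : ∀ i, IsProbabilityMeasure (ν i)
  nu_W : ∀ i, ∫⁻ x, ENNReal.ofReal (W x) ∂(ν i) ≠ ∞
  eta_meas : ∀ i, Measurable (η i)
  eta_nonneg : ∀ i x, 0 ≤ η i x
  eta_ne_zero : ∀ i, η i ≠ 0
  eta_bdd : ∀ i, ∃ C : ℝ, ∀ x, η i x ≤ C * W x
  summable_etanu : ∀ x, Summable (fun i => η i x * (∫⁻ y, ENNReal.ofReal (W y) ∂(ν i)).toReal)
  etanu_bdd : ∃ C : ℝ, ∀ x,
    (∑' i, η i x * (∫⁻ y, ENNReal.ofReal (W y) ∂(ν i)).toReal) ≤ C * W x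
  SW_fin : ∀ n x, ∫⁻ y, ENNReal.ofReal (W y) ∂(S n x) ≠ ∞
  a_nonneg : ∀ n, 0 ≤ a n
  a_tendsto : Tendsto a atTop (nhds 0)
  approx : ∀ f : α → ℝ, Measurable f → ∀ c : ℝ, 0 ≤ c → (∀ x, |f x| ≤ c * W x) →
    ∀ n : ℕ, 1 ≤ n → ∀ x : α,
      |((theta0 S).toReal)⁻¹ ^ n * (n : ℝ) ^ (-(jfun S x)) * (∫ y, f y ∂(S n x)) -
        ∑' i, η i x * ∫ y, f y ∂(ν i)| ≤ a n * W x * c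

/-- `ν` is a quasi-stationary distribution for `S`. -/
def IsQSD (S : ℕ → Kernel α α) (ν : Measure α) : Prop :=
  IsProbabilityMeasure ν ∧ ∀ n, kmass S n ν ≠ 0 ∧
    Measure.bind ν (fun x => S n x) = kmass S n ν • ν

/-! Fix `x`, `n` and `k = j_S(x)`, and let `v_m := θ^{-m} (m + n)^{-k} S_m 𝟙` on `D`. By the
semigroup property `θ^{-n} ∫ v_m d(S_n x) = θ^{-(m+n)} (m + n)^{-k} S_{m+n} 𝟙(x)`, which tends to
`η_S(x)` by Assumption (A) with `f = 𝟙`. Pointwise, `v_m → 𝟙_{j_S = k} η_S` on `{j_S ≤ k}`,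
dominated by a multiple of `W_S`, while `v_m → ∞` on `{j_S > k}` by the definition of `j_S`.
Fatou's lemma makes `{j_S > k}` a null set, and dominated convergence concludes. -/

open Topology

section Fatou

variable {β : Type*} [MeasurableSpace β] {μ : Measure β} {F : ℕ → β → ℝ} {L : ℝ}

theorem ae_not_tendsto_atTop_of_tendsto_integral (hF_meas : ∀ m, Measurable (F m))
    (hF_nonneg : ∀ m y, 0 ≤ F m y) (hF_int : ∀ m, Integrable (F m) μ)
    (hlim : Tendsto (fun m => ∫ y, F m y ∂μ) atTop (𝓝 L)) :
    ∀ᵐ y ∂μ, ¬ Tendsto (fun m => F m y) atTop atTop := by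
  have h_lintegral : ∀ m, ∫⁻ y, ENNReal.ofReal (F m y) ∂μ = ENNReal.ofReal (∫ y, F m y ∂μ) :=
    fun m => (ofReal_integral_eq_lintegral_ofReal (hF_int m) (.of_forall (hF_nonneg m))).symm
  have hfatou : ∫⁻ y, liminf (fun m => ENNReal.ofReal (F m y)) atTop ∂μ ≤ ENNReal.ofReal L :=
    calc _ ≤ liminf (fun m => ∫⁻ y, ENNReal.ofReal (F m y) ∂μ) atTop :=
          lintegral_liminf_le fun m => (hF_meas m).ennreal_ofReal
      _ = ENNReal.ofReal L := by
          simp_rw [h_lintegral]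
          exact (ENNReal.tendsto_ofReal hlim).liminf_eq
  filter_upwards [ae_lt_top (.liminf fun m => (hF_meas m).ennreal_ofReal)
    (ne_top_of_le_ne_top ENNReal.ofReal_ne_top hfatou)] with y hy hdiv
  exact hy.ne (ENNReal.tendsto_ofReal_atTop.comp hdiv).liminf_eq

theorem integral_eq_of_tendsto_integral_of_tendsto_atTop_compl {f bound : β → ℝ} {A : Set β}
    (hF_meas : ∀ m, Measurable (F m)) (hF_nonneg : ∀ m y, 0 ≤ F m y)
    (hF_int : ∀ m, Integrable (F m) μ)
    (hlim : Tendsto (fun m => ∫ y, F m y ∂μ) atTop (𝓝 L))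
    (h_bound_int : Integrable bound μ) (h_bound : ∀ᶠ m in atTop, ∀ y ∈ A, F m y ≤ bound y)
    (h_tendsto : ∀ y ∈ A, Tendsto (fun m => F m y) atTop (𝓝 (f y)))
    (h_atTop : ∀ y ∉ A, Tendsto (fun m => F m y) atTop atTop) :
    ∫ y, f y ∂μ = L := by
  have hA : ∀ᵐ y ∂μ, y ∈ A :=
    (ae_not_tendsto_atTop_of_tendsto_integral hF_meas hF_nonneg hF_int hlim).mono
      fun y hy => by_contra fun hyA => hy (h_atTop y hyA)
  refine tendsto_nhds_unique (tendsto_integral_filter_of_dominated_convergence bound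
    (.of_forall fun m => (hF_meas m).aestronglyMeasurable) ?_ h_bound_int
    (hA.mono h_tendsto)) hlim
  filter_upwards [h_bound] with m hm
  filter_upwards [hA] with y hy
  rw [Real.norm_of_nonneg (hF_nonneg m y)]
  exact hm y hy

end Fatou

namespace IsSubMarkovSemigroup

variable {S : ℕ → Kernel α α}

theorem mass_ne_top (hS : IsSubMarkovSemigroup S) (m : ℕ) (y : α) : S m y Set.univ ≠ ∞ :=
  ne_top_of_le_ne_top one_ne_top (hS.2.2 m y)

theorem lintegral_mass (hS : IsSubMarkovSemigroup S) (n m : ℕ) (x : α) :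
    ∫⁻ y, S m y Set.univ ∂(S n x) = S (n + m) x Set.univ := by
  rw [hS.2.1, Kernel.comp_apply' _ _ _ MeasurableSet.univ]

theorem integrable_mass (hS : IsSubMarkovSemigroup S) (n m : ℕ) (x : α) :
    Integrable (fun y => (S m y Set.univ).toReal) (S n x) :=
  integrable_toReal_of_lintegral_ne_top (Kernel.measurable_coe _ MeasurableSet.univ).aemeasurable
    (hS.lintegral_mass n m x ▸ hS.mass_ne_top _ x)

theorem integral_mass (hS : IsSubMarkovSemigroup S) (n m : ℕ) (x : α) :
    ∫ y, (S m y Set.univ).toReal ∂(S n x) = (S (n + m) x Set.univ).toReal := by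
  rw [integral_toReal (Kernel.measurable_coe _ MeasurableSet.univ).aemeasurable
    (.of_forall fun y => (hS.mass_ne_top m y).lt_top), hS.lintegral_mass]

end IsSubMarkovSemigroup

theorem kmass_dirac (S : ℕ → Kernel α α) (m : ℕ) (y : α) :
    kmass S m (Measure.dirac y) = S m y Set.univ := by
  rw [kmass, Measure.dirac_bind (S m).measurable]

theorem jfun_nonneg (S : ℕ → Kernel α α) (y : α) : 0 ≤ jfun S y :=
  Real.sInf_nonneg fun _ hl => hl.1

theorem jfun_le_of_liminf_eq_zero {S : ℕ → Kernel α α} {l : ℝ} {y : α} (hl : 0 ≤ l)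
    (h : liminf (fun m : ℕ => (m : ℝ≥0∞) ^ (-l) * (theta0 S)⁻¹ ^ m * S m y Set.univ) atTop = 0) :
    jfun S y ≤ l :=
  csInf_le ⟨0, fun _ hl' => hl'.1⟩ ⟨hl, by simpa only [kmass_dirac] using h⟩

theorem tendsto_natCast_div_add_rpow_atTop (x k : ℝ) :
    Tendsto (fun m : ℕ => ((m : ℝ) / (m + x)) ^ k) atTop (𝓝 1) := by
  simpa using (tendsto_natCast_div_add_atTop x).rpow_const (Or.inl one_ne_zero)

section NormalizedMass

variable (S : ℕ → Kernel α α)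

/-- Real-valued version of the sequence whose `liminf` defines `jfun S y`. -/
noncomputable def normMass (l : ℝ) (m : ℕ) (y : α) : ℝ :=
  (m : ℝ) ^ (-l) * (theta0 S).toReal⁻¹ ^ m * (S m y Set.univ).toReal

noncomputable def shiftedNormMass (k : ℝ) (n m : ℕ) (y : α) : ℝ :=
  ((m : ℝ) + n) ^ (-k) * (theta0 S).toReal⁻¹ ^ m * (S m y Set.univ).toReal

variable {S}

theorem normMass_nonneg (l : ℝ) (m : ℕ) (y : α) : 0 ≤ normMass S l m y := by
  unfold normMass
  positivity

theorem shiftedNormMass_nonneg (k : ℝ) (n m : ℕ) (y : α) : 0 ≤ shiftedNormMass S k n m y := by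
  unfold shiftedNormMass
  positivity

theorem measurable_shiftedNormMass (k : ℝ) (n m : ℕ) : Measurable (shiftedNormMass S k n m) :=
  measurable_const.mul (Kernel.measurable_coe _ MeasurableSet.univ).ennreal_toReal

theorem ofReal_normMass (hθ : theta0 S ≠ 0) {m : ℕ} (hm : m ≠ 0) {y : α}
    (hy : S m y Set.univ ≠ ∞) (l : ℝ) :
    ENNReal.ofReal (normMass S l m y) = (m : ℝ≥0∞) ^ (-l) * (theta0 S)⁻¹ ^ m * S m y Set.univ := by
  have hm' : (0 : ℝ) < m := by positivity
  rw [normMass, ENNReal.ofReal_mul (by positivity), ENNReal.ofReal_mul (by positivity),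
    ← ENNReal.ofReal_rpow_of_pos hm', ENNReal.ofReal_natCast, ENNReal.ofReal_pow (by positivity),
    ← ENNReal.toReal_inv, ENNReal.ofReal_toReal (ENNReal.inv_ne_top.2 hθ),
    ENNReal.ofReal_toReal hy]

theorem exists_pos_le_normMass_of_lt_jfun (hθ : theta0 S ≠ 0) {y : α}
    (hy : ∀ m, S m y Set.univ ≠ ∞) {l : ℝ} (hl : 0 ≤ l) (hlj : l < jfun S y) :
    ∃ c > 0, ∀ᶠ m in atTop, c ≤ normMass S l m y := by
  have hpos : 0 < liminf (fun m : ℕ => (m : ℝ≥0∞) ^ (-l) * (theta0 S)⁻¹ ^ m * S m y Set.univ)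
      atTop :=
    pos_iff_ne_zero.2 fun h => hlj.not_ge (jfun_le_of_liminf_eq_zero hl h)
  obtain ⟨c, -, hc0, hc⟩ := ENNReal.lt_iff_exists_real_btwn.1 hpos
  refine ⟨c, ENNReal.ofReal_pos.1 hc0, ?_⟩
  filter_upwards [eventually_lt_of_lt_liminf hc, eventually_ne_atTop 0] with m hcm hm
  rw [← ofReal_normMass hθ hm (hy m)] at hcm
  exact (ENNReal.ofReal_lt_ofReal_iff'.1 hcm).1.le

theorem shiftedNormMass_eq_mul {m : ℕ} (hm : m ≠ 0) (k l : ℝ) (n : ℕ) (y : α) :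
    shiftedNormMass S k n m y = ((m : ℝ) / (m + n)) ^ k * (m : ℝ) ^ (l - k) * normMass S l m y := by
  have hm' : (0 : ℝ) < m := by positivity
  have hmn : (0 : ℝ) < m + n := by positivity
  have : (m : ℝ) ^ k * (m : ℝ) ^ (l - k) * (m : ℝ) ^ (-l) = 1 := by
    rw [← Real.rpow_add hm', ← Real.rpow_add hm']
    simp
  rw [shiftedNormMass, normMass, Real.div_rpow hm'.le hmn.le, div_eq_mul_inv,
    ← Real.rpow_neg hmn.le]
  linear_combination ((m + n : ℝ) ^ (-k) * (theta0 S).toReal⁻¹ ^ m *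
    (S m y Set.univ).toReal) * this.symm

theorem shiftedNormMass_le_normMass {k : ℝ} (hk : 0 ≤ k) {y : α} (hy : jfun S y ≤ k)
    (n : ℕ) {m : ℕ} (hm : m ≠ 0) : shiftedNormMass S k n m y ≤ normMass S (jfun S y) m y := by
  have hm' : (1 : ℝ) ≤ m := by exact_mod_cast Nat.one_le_iff_ne_zero.2 hm
  have hratio : ((m : ℝ) / (m + n)) ^ k ≤ 1 :=
    Real.rpow_le_one (by positivity) (div_le_one_of_le₀ (by linarith [n.cast_nonneg (α := ℝ)])
      (by positivity)) hk
  have hpow : (m : ℝ) ^ (jfun S y - k) ≤ 1 :=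
    Real.rpow_le_one_of_one_le_of_nonpos hm' (by linarith)
  rw [shiftedNormMass_eq_mul hm k (jfun S y)]
  calc _ ≤ 1 * 1 * normMass S (jfun S y) m y := by
        gcongr
        exact normMass_nonneg _ _ _
    _ = _ := by ring

/-- The liminf defining `jfun S y` is positive at `l = (k + jfun S y) / 2`, and the extra
factor `m ^ (l - k)` forces divergence. -/
theorem tendsto_shiftedNormMass_atTop_of_lt_jfun (hθ : theta0 S ≠ 0) {y : α}
    (hy : ∀ m, S m y Set.univ ≠ ∞) {k : ℝ} (hk : 0 ≤ k) (hkj : k < jfun S y) (n : ℕ) :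
    Tendsto (fun m => shiftedNormMass S k n m y) atTop atTop := by
  obtain ⟨c, hc, hcm⟩ := exists_pos_le_normMass_of_lt_jfun hθ hy (l := (k + jfun S y) / 2)
    (by linarith) (by linarith)
  have hgrow : Tendsto
      (fun m : ℕ => ((m : ℝ) / (m + n)) ^ k * (m : ℝ) ^ ((k + jfun S y) / 2 - k) * c)
      atTop atTop :=
    ((tendsto_natCast_div_add_rpow_atTop n k).pos_mul_atTop one_pos
      ((tendsto_rpow_atTop (by linarith)).comp tendsto_natCast_atTop_atTop)).atTop_mul_const hc
  refine tendsto_atTop_mono' _ ?_ hgrow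
  filter_upwards [hcm, eventually_ne_atTop 0] with m hcm hm
  rw [shiftedNormMass_eq_mul hm k ((k + jfun S y) / 2)]
  gcongr

theorem IsSubMarkovSemigroup.integrable_shiftedNormMass (hS : IsSubMarkovSemigroup S)
    (k : ℝ) (n m : ℕ) (x : α) : Integrable (shiftedNormMass S k n m) (S n x) :=
  (hS.integrable_mass n m x).const_mul _

theorem IsSubMarkovSemigroup.integral_shiftedNormMass (hS : IsSubMarkovSemigroup S)
    (hθ : (theta0 S).toReal ≠ 0) (k : ℝ) (n m : ℕ) (x : α) :
    ∫ y, shiftedNormMass S k n m y ∂(S n x) = (theta0 S).toReal ^ n * normMass S k (m + n) x := by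
  simp only [shiftedNormMass]
  rw [integral_const_mul, hS.integral_mass, normMass, add_comm n m, pow_add, inv_pow _ n]
  push_cast
  field_simp

end NormalizedMass

namespace AssumptionA

variable {S : ℕ → Kernel α α} {I : Type} {W : α → ℝ} {ν : I → Measure α} {η : I → α → ℝ}
  {a : ℕ → ℝ}

theorem toReal_theta0_pos (hA : AssumptionA S W ν η a) : 0 < (theta0 S).toReal :=
  ENNReal.toReal_pos hA.theta0_pos.ne' (ne_top_of_le_ne_top one_ne_top hA.theta0_le_one)

theorem integrable_W (hA : AssumptionA S W ν η a) {μ : Measure α}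
    (hμ : ∫⁻ y, ENNReal.ofReal (W y) ∂μ ≠ ∞) :
    Integrable W μ :=
  (lintegral_ofReal_ne_top_iff_integrable hA.W_meas.aestronglyMeasurable
    (.of_forall fun y => zero_le_one.trans (hA.one_le_W y))).1 hμ

theorem one_le_toReal_lintegral_W (hA : AssumptionA S W ν η a) (i : I) :
    1 ≤ (∫⁻ y, ENNReal.ofReal (W y) ∂(ν i)).toReal := by
  have := hA.nu_prob i
  have h : 1 ≤ ∫⁻ y, ENNReal.ofReal (W y) ∂(ν i) :=
    calc 1 = ∫⁻ _, ENNReal.ofReal 1 ∂(ν i) := by simp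
      _ ≤ _ := lintegral_mono fun y => ENNReal.ofReal_le_ofReal (hA.one_le_W y)
  simpa using ENNReal.toReal_mono (hA.nu_W i) h

theorem exists_tsum_eta_le (hA : AssumptionA S W ν η a) : ∃ C, ∀ y, ∑' i, η i y ≤ C * W y := by
  obtain ⟨C, hC⟩ := hA.etanu_bdd
  refine ⟨C, fun y => le_trans ?_ (hC y)⟩
  have hle : ∀ i, η i y ≤ η i y * (∫⁻ z, ENNReal.ofReal (W z) ∂(ν i)).toReal :=
    fun i => le_mul_of_one_le_right (hA.eta_nonneg i y) (hA.one_le_toReal_lintegral_W i)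
  exact Summable.tsum_le_tsum hle
    (.of_nonneg_of_le (hA.eta_nonneg · y) hle (hA.summable_etanu y)) (hA.summable_etanu y)

/-- Assumption (A) tested on `f = 1`. -/
theorem abs_normMass_sub_tsum_le (hA : AssumptionA S W ν η a) {m : ℕ} (hm : m ≠ 0) (y : α) :
    |normMass S (jfun S y) m y - ∑' i, η i y| ≤ a m * W y := by
  have h := hA.approx (fun _ => 1) measurable_const 1 zero_le_one
    (fun z => by simpa using hA.one_le_W z) m (Nat.one_le_iff_ne_zero.2 hm) y
  have hν : ∀ i, ∫ _, (1 : ℝ) ∂(ν i) = 1 := fun i => by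
    have := hA.nu_prob i
    simp
  simp only [hν, integral_const, smul_eq_mul, mul_one, measureReal_def] at h
  rwa [normMass, mul_comm ((m : ℝ) ^ _)]

theorem tendsto_normMass (hA : AssumptionA S W ν η a) (y : α) :
    Tendsto (fun m => normMass S (jfun S y) m y) atTop (𝓝 (∑' i, η i y)) := by
  have hb : Tendsto (fun m => a m * W y) atTop (𝓝 0) := by
    simpa using hA.a_tendsto.mul_const (W y)
  refine tendsto_iff_norm_sub_tendsto_zero.2
    (squeeze_zero' (.of_forall fun _ => norm_nonneg _) ?_ hb)
  filter_upwards [eventually_ne_atTop 0] with m hm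
  exact hA.abs_normMass_sub_tsum_le hm y

theorem exists_shiftedNormMass_le (hA : AssumptionA S W ν η a) {k : ℝ} (hk : 0 ≤ k) (n : ℕ) :
    ∃ C, ∀ m ≠ 0, ∀ y, jfun S y ≤ k → shiftedNormMass S k n m y ≤ C * W y := by
  obtain ⟨C, hC⟩ := hA.exists_tsum_eta_le
  obtain ⟨Ca, hCa⟩ := hA.a_tendsto.bddAbove_range
  refine ⟨C + Ca, fun m hm y hy => ?_⟩
  have hW : 0 ≤ W y := zero_le_one.trans (hA.one_le_W y)
  calc shiftedNormMass S k n m y ≤ normMass S (jfun S y) m y :=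
        shiftedNormMass_le_normMass hk hy n hm
    _ ≤ ∑' i, η i y + a m * W y := by
        linarith [(abs_le.1 (hA.abs_normMass_sub_tsum_le hm y)).2]
    _ ≤ C * W y + Ca * W y := by
        gcongr
        exacts [hC y, hCa ⟨m, rfl⟩]
    _ = (C + Ca) * W y := by ring

theorem tendsto_shiftedNormMass_of_jfun_le (hA : AssumptionA S W ν η a) {k : ℝ} {y : α}
    (hy : jfun S y ≤ k) (n : ℕ) :
    Tendsto (fun m => shiftedNormMass S k n m y) atTop
      (𝓝 ({z | jfun S z = k}.indicator (fun z => ∑' i, η i z) y)) := by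
  have hpow : Tendsto (fun m : ℕ => (m : ℝ) ^ (jfun S y - k)) atTop
      (𝓝 (if jfun S y = k then 1 else 0)) := by
    split_ifs with h
    · simp [h]
    · simpa [Function.comp_def] using (tendsto_rpow_neg_atTop (sub_pos.2 (hy.lt_of_ne h))).comp
        tendsto_natCast_atTop_atTop
  have hlim : 1 * (if jfun S y = k then 1 else 0) * ∑' i, η i y =
      {z | jfun S z = k}.indicator (fun z => ∑' i, η i z) y := by
    by_cases h : jfun S y = k <;> simp [h]
  rw [← hlim]
  refine (((tendsto_natCast_div_add_rpow_atTop n k).mul hpow).mul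
    (hA.tendsto_normMass y)).congr' ?_
  filter_upwards [eventually_ne_atTop 0] with m hm
  exact (shiftedNormMass_eq_mul hm k (jfun S y) n y).symm

end AssumptionA

/-- Under Assumption (A), for every `x ∈ D` and every `n ≥ 0`:
`𝔼_x[η_S(X_n) 𝟙_{j_S(X_n) = j_S(x)} 𝟙_{n < τ_∂}] = θ_{0,S}^n η_S(x)`. -/
theorem expectation_etaS_indicator_eq
    (S : ℕ → Kernel α α) (hS : IsSubMarkovSemigroup S)
    {I : Type} {W : α → ℝ} {ν : I → Measure α} {η : I → α → ℝ} {a : ℕ → ℝ}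
    (hA : AssumptionA S W ν η a) :
    ∀ (x : α) (n : ℕ),
      ∫ y, ({y : α | jfun S y = jfun S x}.indicator (fun y => ∑' i, η i y)) y ∂(S n x) =
        (theta0 S).toReal ^ n * ∑' i, η i x := by
  intro x n
  have hk := jfun_nonneg S x
  obtain ⟨C, hC⟩ := hA.exists_shiftedNormMass_le hk n
  have hlim : Tendsto (fun m => ∫ y, shiftedNormMass S (jfun S x) n m y ∂(S n x)) atTop
      (𝓝 ((theta0 S).toReal ^ n * ∑' i, η i x)) := by
    simp_rw [hS.integral_shiftedNormMass hA.toReal_theta0_pos.ne']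
    exact ((hA.tendsto_normMass x).comp (tendsto_add_atTop_nat n)).const_mul _
  refine integral_eq_of_tendsto_integral_of_tendsto_atTop_compl
    (A := {y | jfun S y ≤ jfun S x}) (bound := fun y => C * W y)
    (measurable_shiftedNormMass _ n) (fun m => shiftedNormMass_nonneg _ n m)
    (hS.integrable_shiftedNormMass _ n · x) hlim
    ((hA.integrable_W (hA.SW_fin n x)).const_mul C) ?_
    (fun y hy => hA.tendsto_shiftedNormMass_of_jfun_le hy n)
    (fun y hy => tendsto_shiftedNormMass_atTop_of_lt_jfun hA.theta0_pos.ne'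
      (hS.mass_ne_top · y) hk (not_le.1 hy) n)
  filter_upwards [eventually_ne_atTop 0] with m hm y hy using hC m hm y hy
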